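/- Fix a dyadic grid 𝒟 on ℝⁿ, a subset 𝓕 ⊆ 𝒟, integers 1 ≤ r ≤ τ, and 0 < ε < 1. For F ∈ 𝓕 let 𝔠_𝓕(F) denote the maximal members of 𝓕 strictly contained in F, and define the good τ-shifted corona 𝒞_F^{good,τ-shift} := {J′ ∈ 𝒟 : J′ is (r,ε)-good, J′ ⋐_{τ,ε} F, and J′ is not (τ,ε)-deeply embedded in any F′ ∈ 𝔠_𝓕(F)}. For I ∈ 𝒟 contained in some member of 𝓕, let π_𝓕^{(0)}I be the smallest member of 𝓕 containing I, and π_𝓕^{(ℓ+1)}I the smallest member of 𝓕 strictly containing π_𝓕^{(ℓ)}I. If I₀ ∈ 𝒟 and F ∈ 𝓕 satisfy I₀ ⊊ F, and there exists J′ ∈ 𝒞_F^{good,τ-shift} with J′ ⊆ I₀, then F = π_𝓕^{(ℓ)}I₀ for some 0 ≤ ℓ ≤ τ. In particular, for each fixed I₀ ∈ 𝒟, the number of F ∈ 𝓕 with I₀ ⊊ F for which some J′ ∈ 𝒞_F^{good,τ-shift} satisfies J′ ⊆ I₀ is at most τ + 1. -/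

import Mathlib

open MeasureTheory
open scoped ENNReal NNReal

noncomputable section

/-- An axis-parallel half-open cube in `ℝⁿ`, given by its corner `a` and side length `l`. -/
structure QCube (n : ℕ) where
  a : Fin n → ℝ
  l : ℝ

/-- The half-open cube as a subset of `ℝⁿ`. -/
def QCube.pts {n : ℕ} (Q : QCube n) : Set (EuclideanSpace ℝ (Fin n)) :=
  {x | ∀ i, Q.a i ≤ x i ∧ x i < Q.a i + Q.l}

/-- The dyadic grid on `ℝⁿ` obtained by translating the standard grid by `t`. -/
def dyadicGrid {n : ℕ} (t : Fin n → ℝ) : Set (QCube n) :=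
  {Q | ∃ (k : ℤ) (m : Fin n → ℤ),
    Q = ⟨fun i => t i + (2:ℝ) ^ (-k) * (m i : ℝ), (2:ℝ) ^ (-k)⟩}

/-- `J ⋐_{r,ε} K` : `J` is `(r,ε)`-deeply embedded in `K`. -/
def deepEmb {n : ℕ} (r : ℕ) (ε : ℝ) (J K : QCube n) : Prop :=
  J.pts ⊆ K.pts ∧ J.l ≤ 2 ^ (-(r : ℝ)) * K.l ∧
    ∀ x ∈ J.pts, ∀ y ∉ K.pts, 1 / 2 * J.l ^ ε * K.l ^ (1 - ε) ≤ dist x y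

/-- A dyadic cube `J` of the grid `t` is `(r,ε)`-good if `J ⋐_{r,ε} I` for every dyadic
cube `I ⊇ J` with `ℓ(J) ≤ 2^{−r} ℓ(I)`. -/
def isGood {n : ℕ} (t : Fin n → ℝ) (r : ℕ) (ε : ℝ) (J : QCube n) : Prop :=
  ∀ I ∈ dyadicGrid t, J.pts ⊆ I.pts → J.l ≤ 2 ^ (-(r : ℝ)) * I.l → deepEmb r ε J I

/-- `𝔠_𝓕(F)`: the maximal members of `𝓕` strictly contained in `F`. -/
def FChildren {n : ℕ} (F𝓕 : Set (QCube n)) (F : QCube n) : Set (QCube n) :=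
  {G | G ∈ F𝓕 ∧ G.pts ⊂ F.pts ∧
    ∀ H ∈ F𝓕, H.pts ⊂ F.pts → G.pts ⊆ H.pts → H.pts ⊆ G.pts}

/-- The good `τ`-shifted corona `𝒞_F^{good,τ-shift}`: the `(r,ε)`-good dyadic cubes `J'`
with `J' ⋐_{τ,ε} F` which are not `(τ,ε)`-deeply embedded in any `𝓕`-child of `F`. -/
def goodShiftCorona {n : ℕ} (t : Fin n → ℝ) (r τ : ℕ) (ε : ℝ)
    (F𝓕 : Set (QCube n)) (F : QCube n) : Set (QCube n) :=
  {J | J ∈ dyadicGrid t ∧ isGood t r ε J ∧ deepEmb τ ε J F ∧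
    ∀ F' ∈ FChildren F𝓕 F, ¬ deepEmb τ ε J F'}

/-- `F` is the smallest member of `𝓕` containing `I`. -/
def IsMinContain {n : ℕ} (F𝓕 : Set (QCube n)) (I F : QCube n) : Prop :=
  F ∈ F𝓕 ∧ I.pts ⊆ F.pts ∧ ∀ F' ∈ F𝓕, I.pts ⊆ F'.pts → F.pts ⊆ F'.pts

/-- `F` is the smallest member of `𝓕` strictly containing `I`. -/
def IsMinStrictContain {n : ℕ} (F𝓕 : Set (QCube n)) (I F : QCube n) : Prop :=
  F ∈ F𝓕 ∧ I.pts ⊂ F.pts ∧ ∀ F' ∈ F𝓕, I.pts ⊂ F'.pts → F.pts ⊆ F'.pts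

/-- `F = π_𝓕^{(ℓ)} I`: `F` is the `ℓ`-fold iterated minimal `𝓕`-parent of `I`. -/
def IsPiF {n : ℕ} (F𝓕 : Set (QCube n)) (I : QCube n) : ℕ → QCube n → Prop
  | 0, F => IsMinContain F𝓕 I F
  | ℓ + 1, F => ∃ G, IsPiF F𝓕 I ℓ G ∧ IsMinStrictContain F𝓕 G F

/-!
The members of `𝓕` between `I₀` and `F` form a chain, since two dyadic cubes containing `I₀` are
nested, and `F = π_𝓕^{(m)} I₀` where `m` is the number of its members strictly below `F`.
Distinct members of the chain have distinct dyadic side lengths, all at least `ℓ(I₀)`; so if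
`m > τ`, the top member `M` of the chain, an `𝓕`-child of `F`, has `ℓ(J') ≤ ℓ(I₀) ≤ 2^{-τ} ℓ(M)`.
As `r ≤ τ`, goodness of `J'` gives `J' ⋐_{r,ε} M`, whose distance condition does not involve `r`,
hence `J' ⋐_{τ,ε} M`: this contradicts `J'` lying in the shifted corona of `F`. The bound `τ + 1`
holds because `π_𝓕^{(ℓ)} I₀` is unique for each `ℓ`.
-/

lemma floor_mul_two_zpow_eq_of_le {u v : ℝ} {k k' : ℤ} (hk : k' ≤ k)
    (h : ⌊u * 2 ^ k⌋ = ⌊v * 2 ^ k⌋) : ⌊u * 2 ^ k'⌋ = ⌊v * 2 ^ k'⌋ := by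
  obtain ⟨d, rfl⟩ := Int.le.dest hk
  have coarsen (w : ℝ) : w * 2 ^ k' = w * 2 ^ (k' + d) / ((2 ^ d : ℕ) : ℝ) := by
    rw [zpow_add₀ two_ne_zero, zpow_natCast]
    push_cast
    field_simp
  rw [coarsen u, coarsen v, Int.floor_div_natCast, Int.floor_div_natCast, h]

namespace QCube

variable {n : ℕ} {t : Fin n → ℝ} {I Q Q' : QCube n}

lemma l_pos_of_mem_dyadicGrid (hQ : Q ∈ dyadicGrid t) : 0 < Q.l := by
  obtain ⟨k, m, rfl⟩ := hQ
  exact zpow_pos two_pos _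

lemma toLp_a_mem_pts (hQ : 0 < Q.l) : WithLp.toLp 2 Q.a ∈ Q.pts :=
  fun _ => ⟨le_rfl, lt_add_of_pos_right _ hQ⟩

lemma coord_bounds_of_pts_subset (hQ : 0 < Q.l) (h : Q.pts ⊆ Q'.pts) (i : Fin n) :
    Q'.a i ≤ Q.a i ∧ Q.a i + Q.l ≤ Q'.a i + Q'.l := by
  rw [← Set.Ico_subset_Ico_iff (lt_add_of_pos_right _ hQ)]
  intro y hy
  have hx : WithLp.toLp 2 (Function.update Q.a i y) ∈ Q.pts := by
    intro j
    rcases eq_or_ne j i with rfl | hj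
    · simpa using hy
    · simpa [hj] using toLp_a_mem_pts hQ j
  simpa using h hx i

lemma l_le_of_pts_subset (hn : n ≠ 0) (hQ : 0 < Q.l) (h : Q.pts ⊆ Q'.pts) : Q.l ≤ Q'.l := by
  obtain ⟨h₁, h₂⟩ := coord_bounds_of_pts_subset hQ h ⟨0, Nat.pos_of_ne_zero hn⟩
  linarith

lemma eq_of_pts_subset_of_l_eq (hQ : 0 < Q.l) (h : Q.pts ⊆ Q'.pts) (hl : Q.l = Q'.l) :
    Q = Q' := by
  have ha : Q.a = Q'.a := funext fun i => by
    obtain ⟨h₁, h₂⟩ := coord_bounds_of_pts_subset hQ h i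
    linarith
  cases Q
  cases Q'
  congr

lemma eq_of_pts_eq (hn : n ≠ 0) (hQ : 0 < Q.l) (hQ' : 0 < Q'.l) (h : Q.pts = Q'.pts) :
    Q = Q' :=
  eq_of_pts_subset_of_l_eq hQ h.subset <|
    (l_le_of_pts_subset hn hQ h.subset).antisymm (l_le_of_pts_subset hn hQ' h.superset)

lemma dim_ne_zero_of_pts_ssubset (h : Q.pts ⊂ Q'.pts) : n ≠ 0 := by
  rintro rfl
  exact h.ne (by ext x; simp [pts])

lemma mem_pts_iff_floor_eq {k : ℤ} {m : Fin n → ℤ} {x : EuclideanSpace ℝ (Fin n)} :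
    x ∈ (⟨fun i => t i + (2:ℝ) ^ (-k) * m i, (2:ℝ) ^ (-k)⟩ : QCube n).pts ↔
      ∀ i, ⌊(x i - t i) * 2 ^ k⌋ = m i := by
  refine forall_congr' fun i => ?_
  have h2k : (0:ℝ) < 2 ^ k := zpow_pos two_pos k
  dsimp only
  rw [Int.floor_eq_iff, ← div_le_iff₀ h2k, ← lt_div_iff₀ h2k, zpow_neg, inv_mul_eq_div, add_div,
    ← one_div, le_sub_iff_add_le', sub_lt_iff_lt_add', add_assoc]

lemma pts_subset_of_l_le (hQ : Q ∈ dyadicGrid t) (hQ' : Q' ∈ dyadicGrid t)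
    {x : EuclideanSpace ℝ (Fin n)} (hx : x ∈ Q.pts) (hx' : x ∈ Q'.pts) (hl : Q.l ≤ Q'.l) :
    Q.pts ⊆ Q'.pts := by
  obtain ⟨k, m, rfl⟩ := hQ
  obtain ⟨k', m', rfl⟩ := hQ'
  have hk : k' ≤ k := by simpa using (zpow_le_zpow_iff_right₀ one_lt_two).1 hl
  rw [mem_pts_iff_floor_eq] at hx hx'
  intro y hy
  rw [mem_pts_iff_floor_eq] at hy ⊢
  exact fun i => (floor_mul_two_zpow_eq_of_le hk ((hy i).trans (hx i).symm)).trans (hx' i)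

lemma pts_subset_total (hI : I ∈ dyadicGrid t) (hQ : Q ∈ dyadicGrid t) (hQ' : Q' ∈ dyadicGrid t)
    (h : I.pts ⊆ Q.pts) (h' : I.pts ⊆ Q'.pts) : Q.pts ⊆ Q'.pts ∨ Q'.pts ⊆ Q.pts := by
  have hx := toLp_a_mem_pts (l_pos_of_mem_dyadicGrid hI)
  rcases le_total Q.l Q'.l with hl | hl
  · exact .inl (pts_subset_of_l_le hQ hQ' (h hx) (h' hx) hl)
  · exact .inr (pts_subset_of_l_le hQ' hQ (h' hx) (h hx) hl)

lemma two_zpow_log_l (hQ : Q ∈ dyadicGrid t) : (2:ℝ) ^ Int.log 2 Q.l = Q.l := by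
  obtain ⟨k, m, rfl⟩ := hQ
  have := Int.log_zpow (R := ℝ) one_lt_two (-k)
  push_cast at this
  rw [this]

lemma l_le_two_rpow_neg_mul_of_log_add_le (hQ : Q ∈ dyadicGrid t)
    (hQ' : Q' ∈ dyadicGrid t) {τ : ℕ} (h : Int.log 2 Q.l + τ ≤ Int.log 2 Q'.l) :
    Q.l ≤ 2 ^ (-(τ : ℝ)) * Q'.l := by
  rw [← two_zpow_log_l hQ, ← two_zpow_log_l hQ', Real.rpow_neg zero_le_two, Real.rpow_natCast,
    ← zpow_natCast, ← zpow_neg, ← zpow_add₀ two_ne_zero]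
  exact zpow_le_zpow_right₀ one_le_two (by omega)

end QCube

open Set QCube

section Tower

variable {n : ℕ} {t : Fin n → ℝ} {F𝓕 S : Set (QCube n)} {I₀ G M : QCube n}

lemma injOn_log_l (hI₀ : I₀ ∈ dyadicGrid t) (hS : S ⊆ dyadicGrid t)
    (hI : ∀ H ∈ S, I₀.pts ⊆ H.pts) : S.InjOn fun H => Int.log 2 H.l := by
  intro H hH H' hH' hlog
  have hl : H.l = H'.l := by
    rw [← two_zpow_log_l (hS hH), ← two_zpow_log_l (hS hH')]
    exact congrArg _ hlog
  rcases pts_subset_total hI₀ (hS hH) (hS hH') (hI H hH) (hI H' hH') with h | h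
  · exact eq_of_pts_subset_of_l_eq (l_pos_of_mem_dyadicGrid (hS hH)) h hl
  · exact (eq_of_pts_subset_of_l_eq (l_pos_of_mem_dyadicGrid (hS hH')) h hl.symm).symm

lemma mapsTo_log_l (hn : n ≠ 0) (hI₀ : I₀ ∈ dyadicGrid t) (hS : S ⊆ dyadicGrid t)
    (hI : ∀ H ∈ S, I₀.pts ⊆ H.pts) (hG : ∀ H ∈ S, H.pts ⊆ G.pts) :
    MapsTo (fun H => Int.log 2 H.l) S (Icc (Int.log 2 I₀.l) (Int.log 2 G.l)) := fun H hH =>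
  have hI₀pos := l_pos_of_mem_dyadicGrid hI₀
  have hHpos := l_pos_of_mem_dyadicGrid (hS hH)
  ⟨Int.log_mono_right hI₀pos (l_le_of_pts_subset hn hI₀pos (hI H hH)),
    Int.log_mono_right hHpos (l_le_of_pts_subset hn hHpos (hG H hH))⟩

lemma ncard_le_toNat_log_sub (hn : n ≠ 0) (hI₀ : I₀ ∈ dyadicGrid t) (hS : S ⊆ dyadicGrid t)
    (hI : ∀ H ∈ S, I₀.pts ⊆ H.pts) (hG : ∀ H ∈ S, H.pts ⊆ G.pts) :
    S.ncard ≤ (Int.log 2 G.l + 1 - Int.log 2 I₀.l).toNat := by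
  rw [← Int.card_Icc, ← ncard_coe_finset, Finset.coe_Icc]
  exact ncard_le_ncard_of_injOn _ (mapsTo_log_l hn hI₀ hS hI hG) (injOn_log_l hI₀ hS hI)
    (finite_Icc _ _)

def tower (F𝓕 : Set (QCube n)) (I₀ G : QCube n) : Set (QCube n) :=
  {H | H ∈ F𝓕 ∧ I₀.pts ⊆ H.pts ∧ H.pts ⊂ G.pts}

lemma tower_subset_dyadicGrid (h𝓕 : F𝓕 ⊆ dyadicGrid t) : tower F𝓕 I₀ G ⊆ dyadicGrid t :=
  fun _ hH => h𝓕 hH.1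

lemma finite_tower (hn : n ≠ 0) (h𝓕 : F𝓕 ⊆ dyadicGrid t) (hI₀ : I₀ ∈ dyadicGrid t) :
    (tower F𝓕 I₀ G).Finite :=
  Finite.of_injOn
    (mapsTo_log_l hn hI₀ (tower_subset_dyadicGrid h𝓕) (fun _ hH => hH.2.1) fun _ hH => hH.2.2.subset)
    (injOn_log_l hI₀ (tower_subset_dyadicGrid h𝓕) fun _ hH => hH.2.1) (finite_Icc _ _)

lemma exists_greatest_tower (hn : n ≠ 0) (h𝓕 : F𝓕 ⊆ dyadicGrid t) (hI₀ : I₀ ∈ dyadicGrid t)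
    (hne : (tower F𝓕 I₀ G).Nonempty) :
    ∃ M ∈ tower F𝓕 I₀ G, ∀ H ∈ tower F𝓕 I₀ G, H.pts ⊆ M.pts := by
  obtain ⟨M, hM, hmax⟩ := (finite_tower hn h𝓕 hI₀).exists_maximalFor QCube.l _ hne
  refine ⟨M, hM, fun H hH => ?_⟩
  have hMpos := l_pos_of_mem_dyadicGrid (h𝓕 hM.1)
  rcases pts_subset_total hI₀ (h𝓕 hH.1) (h𝓕 hM.1) hH.2.1 hM.2.1 with h | h
  · exact h
  · have hle := l_le_of_pts_subset hn hMpos h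
    rw [eq_of_pts_subset_of_l_eq hMpos h (hle.antisymm (hmax hH hle))]

variable (hM : M ∈ tower F𝓕 I₀ G) (hmax : ∀ H ∈ tower F𝓕 I₀ G, H.pts ⊆ M.pts)
include hM hmax

lemma mem_FChildren_of_greatest_tower : M ∈ FChildren F𝓕 G :=
  ⟨hM.1, hM.2.2, fun H hH hHG hMH => hmax H ⟨hH, hM.2.1.trans hMH, hHG⟩⟩

lemma tower_eq_diff_of_greatest_tower (hn : n ≠ 0) (h𝓕 : F𝓕 ⊆ dyadicGrid t) :
    tower F𝓕 I₀ M = tower F𝓕 I₀ G \ {M} := by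
  ext H
  constructor
  · rintro ⟨hH, hIH, hHM⟩
    exact ⟨⟨hH, hIH, hHM.trans hM.2.2⟩, by rintro rfl; exact hHM.ne rfl⟩
  · rintro ⟨hHT, hHM⟩
    refine ⟨hHT.1, hHT.2.1, (hmax H hHT).ssubset_of_ne fun h => hHM ?_⟩
    exact eq_of_pts_eq hn (l_pos_of_mem_dyadicGrid (h𝓕 hHT.1))
      (l_pos_of_mem_dyadicGrid (h𝓕 hM.1)) h

lemma isMinStrictContain_of_greatest_tower (h𝓕 : F𝓕 ⊆ dyadicGrid t) (hI₀ : I₀ ∈ dyadicGrid t)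
    (hG : G ∈ F𝓕) : IsMinStrictContain F𝓕 M G := by
  refine ⟨hG, hM.2.2, fun F hF hMF => ?_⟩
  rcases pts_subset_total hI₀ (h𝓕 hG) (h𝓕 hF) (hM.2.1.trans hM.2.2.subset)
    (hM.2.1.trans hMF.subset) with hGF | hFG
  · exact hGF
  · by_contra hGF
    exact ssubset_irrefl _ (hMF.trans_subset (hmax F ⟨hF, hM.2.1.trans hMF.subset,
      hFG.ssubset_of_not_subset hGF⟩))

end Tower

section Iterates

variable {n : ℕ} {t : Fin n → ℝ} {F𝓕 : Set (QCube n)} {I₀ : QCube n}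

lemma isMinContain_of_tower_eq_empty (h𝓕 : F𝓕 ⊆ dyadicGrid t) (hI₀ : I₀ ∈ dyadicGrid t)
    {G : QCube n} (hG : G ∈ F𝓕) (hIG : I₀.pts ⊆ G.pts) (h : tower F𝓕 I₀ G = ∅) :
    IsMinContain F𝓕 I₀ G := by
  refine ⟨hG, hIG, fun F hF hIF => ?_⟩
  rcases pts_subset_total hI₀ (h𝓕 hG) (h𝓕 hF) hIG hIF with hGF | hFG
  · exact hGF
  · by_contra hGF
    exact eq_empty_iff_forall_notMem.1 h F ⟨hF, hIF, hFG.ssubset_of_not_subset hGF⟩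

lemma isPiF_of_ncard_tower_eq (hn : n ≠ 0) (h𝓕 : F𝓕 ⊆ dyadicGrid t)
    (hI₀ : I₀ ∈ dyadicGrid t) {m : ℕ} {G : QCube n} (hG : G ∈ F𝓕) (hIG : I₀.pts ⊆ G.pts)
    (hm : (tower F𝓕 I₀ G).ncard = m) : IsPiF F𝓕 I₀ m G := by
  induction m generalizing G with
  | zero =>
    exact isMinContain_of_tower_eq_empty h𝓕 hI₀ hG hIG
      ((ncard_eq_zero (finite_tower hn h𝓕 hI₀)).1 hm)
  | succ m ih =>
    have hne : (tower F𝓕 I₀ G).Nonempty := nonempty_of_ncard_ne_zero (by omega)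
    obtain ⟨M, hM, hmax⟩ := exists_greatest_tower hn h𝓕 hI₀ hne
    refine ⟨M, ih hM.1 hM.2.1 ?_, isMinStrictContain_of_greatest_tower hM hmax h𝓕 hI₀ hG⟩
    rw [tower_eq_diff_of_greatest_tower hM hmax hn h𝓕,
      ncard_sdiff_singleton_of_mem hM, hm, Nat.add_sub_cancel]

lemma IsPiF.unique (hn : n ≠ 0) (h𝓕 : F𝓕 ⊆ dyadicGrid t) {ℓ : ℕ} {F F' : QCube n}
    (h : IsPiF F𝓕 I₀ ℓ F) (h' : IsPiF F𝓕 I₀ ℓ F') : F = F' := by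
  have hpos {H : QCube n} (hH : H ∈ F𝓕) : 0 < H.l := l_pos_of_mem_dyadicGrid (h𝓕 hH)
  induction ℓ generalizing F F' with
  | zero =>
    exact eq_of_pts_eq hn (hpos h.1) (hpos h'.1)
      ((h.2.2 F' h'.1 h'.2.1).antisymm (h'.2.2 F h.1 h.2.1))
  | succ ℓ ih =>
    obtain ⟨G, hG, hGF⟩ := h
    obtain ⟨G', hG', hGF'⟩ := h'
    obtain rfl := ih hG hG'
    exact eq_of_pts_eq hn (hpos hGF.1) (hpos hGF'.1)
      ((hGF.2.2 F' hGF'.1 hGF'.2.1).antisymm (hGF'.2.2 F hGF.1 hGF.2.1))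

lemma exists_isPiF_le_of_mem_goodShiftCorona {r τ : ℕ} {ε : ℝ} (hrτ : r ≤ τ)
    (h𝓕 : F𝓕 ⊆ dyadicGrid t) (hI₀ : I₀ ∈ dyadicGrid t) {F J : QCube n} (hF : F ∈ F𝓕)
    (hIF : I₀.pts ⊂ F.pts) (hJ : J ∈ goodShiftCorona t r τ ε F𝓕 F) (hJI : J.pts ⊆ I₀.pts) :
    ∃ ℓ ≤ τ, IsPiF F𝓕 I₀ ℓ F := by
  have hn := dim_ne_zero_of_pts_ssubset hIF
  refine ⟨_, ?_, isPiF_of_ncard_tower_eq hn h𝓕 hI₀ hF hIF.subset rfl⟩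
  by_contra! hτ
  have hne : (tower F𝓕 I₀ F).Nonempty := nonempty_of_ncard_ne_zero (by omega)
  obtain ⟨M, hM, hmax⟩ := exists_greatest_tower hn h𝓕 hI₀ hne
  have hcount := ncard_le_toNat_log_sub hn hI₀ (tower_subset_dyadicGrid h𝓕)
    (fun _ hH => hH.2.1) hmax
  have hM𝒟 := h𝓕 hM.1
  have hJM : J.l ≤ 2 ^ (-(τ : ℝ)) * M.l :=
    (l_le_of_pts_subset hn (l_pos_of_mem_dyadicGrid hJ.1) hJI).trans
      (l_le_two_rpow_neg_mul_of_log_add_le hI₀ hM𝒟 (by omega))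
  have hτr : (2 : ℝ) ^ (-(τ : ℝ)) * M.l ≤ 2 ^ (-(r : ℝ)) * M.l := by
    gcongr
    · exact (l_pos_of_mem_dyadicGrid hM𝒟).le
    · exact one_le_two
  obtain ⟨-, hgood, -, hshallow⟩ := hJ
  have hdeep := hgood M hM𝒟 (hJI.trans hM.2.1) (hJM.trans hτr)
  exact hshallow M (mem_FChildren_of_greatest_tower hM hmax) ⟨hdeep.1, hJM, hdeep.2.2⟩

end Iterates

lemma finite_and_ncard_le_of_unique {α : Type*} {P : ℕ → α → Prop}
    (hP : ∀ ℓ a b, P ℓ a → P ℓ b → a = b) (τ : ℕ) :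
    {a | ∃ ℓ ≤ τ, P ℓ a}.Finite ∧ {a | ∃ ℓ ≤ τ, P ℓ a}.ncard ≤ τ + 1 := by
  have hmaps : MapsTo (fun a => sInf {ℓ | P ℓ a}) {a | ∃ ℓ ≤ τ, P ℓ a} (Iic τ) :=
    fun _ ⟨_, hℓ, ha⟩ => (Nat.sInf_le ha).trans hℓ
  have hinj : InjOn (fun a => sInf {ℓ | P ℓ a}) {a | ∃ ℓ ≤ τ, P ℓ a} :=
    fun a ⟨ℓ, _, ha⟩ b ⟨ℓ', _, hb⟩ (hab : sInf {ℓ | P ℓ a} = sInf {ℓ | P ℓ b}) =>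
      hP _ a b (Nat.sInf_mem (s := {ℓ | P ℓ a}) ⟨ℓ, ha⟩)
        (hab ▸ Nat.sInf_mem (s := {ℓ | P ℓ b}) ⟨ℓ', hb⟩)
  refine ⟨Finite.of_injOn hmaps hinj (finite_Iic τ), ?_⟩
  exact (ncard_le_ncard_of_injOn _ hmaps hinj (finite_Iic τ)).trans_eq (by simp)

theorem statement15_general (n r τ : ℕ) (ε : ℝ) (hrτ : r ≤ τ)
    (t : Fin n → ℝ) (F𝓕 : Set (QCube n)) (h𝓕 : F𝓕 ⊆ dyadicGrid t) :
    (∀ I₀ ∈ dyadicGrid t, ∀ F ∈ F𝓕, I₀.pts ⊂ F.pts →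
      (∃ J ∈ goodShiftCorona t r τ ε F𝓕 F, J.pts ⊆ I₀.pts) →
      ∃ ℓ ≤ τ, IsPiF F𝓕 I₀ ℓ F) ∧
    (∀ I₀ ∈ dyadicGrid t,
      {F : QCube n | F ∈ F𝓕 ∧ I₀.pts ⊂ F.pts ∧
        ∃ J ∈ goodShiftCorona t r τ ε F𝓕 F, J.pts ⊆ I₀.pts}.Finite ∧
      {F : QCube n | F ∈ F𝓕 ∧ I₀.pts ⊂ F.pts ∧
        ∃ J ∈ goodShiftCorona t r τ ε F𝓕 F, J.pts ⊆ I₀.pts}.ncard ≤ τ + 1) := by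
  refine ⟨fun I₀ hI₀ F hF hIF ⟨J, hJ, hJI⟩ =>
    exists_isPiF_le_of_mem_goodShiftCorona hrτ h𝓕 hI₀ hF hIF hJ hJI, fun I₀ hI₀ => ?_⟩
  set S := {F : QCube n | F ∈ F𝓕 ∧ I₀.pts ⊂ F.pts ∧
    ∃ J ∈ goodShiftCorona t r τ ε F𝓕 F, J.pts ⊆ I₀.pts}
  rcases S.eq_empty_or_nonempty with hS | ⟨F, -, hIF, -⟩
  · simp [hS]
  have hsub : S ⊆ {F | ∃ ℓ ≤ τ, IsPiF F𝓕 I₀ ℓ F} := fun _ ⟨hF, hIF, _, hJ, hJI⟩ =>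
    exists_isPiF_le_of_mem_goodShiftCorona hrτ h𝓕 hI₀ hF hIF hJ hJI
  obtain ⟨hfin, hcard⟩ := finite_and_ncard_le_of_unique
    (fun ℓ _ _ => IsPiF.unique (dim_ne_zero_of_pts_ssubset hIF) h𝓕 (ℓ := ℓ)) τ
  exact ⟨hfin.subset hsub, (ncard_le_ncard hsub hfin).trans hcard⟩

/-- `τ`-overlap of the good shifted coronas: if `I₀ ∈ 𝒟`, `F ∈ 𝓕`,
`I₀ ⊊ F`, and some `J' ∈ 𝒞_F^{good,τ-shift}` satisfies `J' ⊆ I₀`, then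
`F = π_𝓕^{(ℓ)} I₀` for some `0 ≤ ℓ ≤ τ`; in particular, for each `I₀` there are at most
`τ + 1` such `F ∈ 𝓕`. -/
theorem statement15 (n r τ : ℕ) (ε : ℝ) (hr : 1 ≤ r) (hrτ : r ≤ τ)
    (hε0 : 0 < ε) (hε1 : ε < 1)
    (t : Fin n → ℝ) (F𝓕 : Set (QCube n)) (h𝓕 : F𝓕 ⊆ dyadicGrid t) :
    (∀ I₀ ∈ dyadicGrid t, ∀ F ∈ F𝓕, I₀.pts ⊂ F.pts →
      (∃ J ∈ goodShiftCorona t r τ ε F𝓕 F, J.pts ⊆ I₀.pts) →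
      ∃ ℓ ≤ τ, IsPiF F𝓕 I₀ ℓ F) ∧
    (∀ I₀ ∈ dyadicGrid t,
      {F : QCube n | F ∈ F𝓕 ∧ I₀.pts ⊂ F.pts ∧
        ∃ J ∈ goodShiftCorona t r τ ε F𝓕 F, J.pts ⊆ I₀.pts}.Finite ∧
      {F : QCube n | F ∈ F𝓕 ∧ I₀.pts ⊂ F.pts ∧
        ∃ J ∈ goodShiftCorona t r τ ε F𝓕 F, J.pts ⊆ I₀.pts}.ncard ≤ τ + 1) :=
  statement15_general n r τ ε hrτ t F𝓕 h𝓕
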